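/- Let 𝒳, 𝒴, 𝒵 be finite types, d ≥ 1, P a probability mass function on 𝒳×𝒴×𝒵, (ρ^{x,y,z}) a family of d×d density matrices, and ε ≥ 0. If δ(ρ_{XYZE}, ρ_{X↔Y↔(ZE)}) ≤ ε, then δ(ρ_{XYZE}, ρ_{X↔(Y,Z)↔E}) ≤ 2ε. -/

import Mathlib

open Matrix Kronecker
open scoped ComplexOrder

/-- Trace distance of two (Hermitian) matrices: half the sum of the absolute
values of the eigenvalues of their difference. -/
noncomputable def traceDist {n : Type*} [Fintype n] [DecidableEq n]
    (A B : Matrix n n ℂ) : ℝ :=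
  if h : (A - B).IsHermitian then (1 / 2) * ∑ i, |h.eigenvalues i| else 0

/-- A probability mass function on a finite type. -/
def IsPMF {𝒯 : Type*} [Fintype 𝒯] (P : 𝒯 → ℝ) : Prop :=
  (∀ t, 0 ≤ P t) ∧ ∑ t, P t = 1

/-- A density matrix: positive semidefinite (hence Hermitian) with trace 1. -/
def IsDensity {d : ℕ} (ρ : Matrix (Fin d) (Fin d) ℂ) : Prop :=
  ρ.PosSemidef ∧ ρ.trace = 1

/-- The block-diagonal density matrix of a cq-state:  ρ = Σ_t P(t)·(E_{t,t} ⊗ ρ^t). -/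
noncomputable def cqState {𝒯 : Type*} [Fintype 𝒯] [DecidableEq 𝒯] {d : ℕ}
    (P : 𝒯 → ℝ) (ρ : 𝒯 → Matrix (Fin d) (Fin d) ℂ) :
    Matrix (𝒯 × Fin d) (𝒯 × Fin d) ℂ :=
  ∑ t, (P t : ℂ) • (Matrix.single t t 1 ⊗ₖ ρ t)

/-!
The two Markov states `ρ_{X↔Y↔(ZE)} = cqState Q ρ_E` and `ρ_{X↔(Y,Z)↔E} = cqState P ρ_E` carry the
same conditional states and differ only in their classical distributions, so by the triangle
inequality it suffices to bound `‖cqState Q ρ_E - cqState P ρ_E‖₁ ≤ ∑ |Q - P|` by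
`‖cqState P ρ - cqState Q ρ_E‖₁`. This holds because reading off the classical register, i.e.
pairing with a block-diagonal `±1` matrix, does not increase the trace norm, and the conditional
states have trace one wherever `P` or `Q` has mass. The trace norm itself is handled through its
variational formula `‖A‖₁ = max {re tr (W A) : -1 ≤ W ≤ 1}`.
-/

open scoped MatrixOrder

namespace Matrix

variable {n : Type*} [DecidableEq n]

lemma neg_one_le_diagonal_sign (x : n → ℝ) :
    -1 ≤ diagonal fun i => ((SignType.sign (x i) : ℝ) : ℂ) := by
  rw [le_iff, ← diagonal_one, sub_neg_eq_add, diagonal_add, posSemidef_diagonal_iff]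
  intro i
  cases SignType.sign (x i) <;> norm_num

lemma diagonal_sign_le_one (x : n → ℝ) :
    (diagonal fun i => ((SignType.sign (x i) : ℝ) : ℂ)) ≤ 1 := by
  rw [le_iff, ← diagonal_one, diagonal_sub, posSemidef_diagonal_iff]
  intro i
  cases SignType.sign (x i) <;> norm_num

lemma abs_re_diag_le_one {V : Matrix n n ℂ} (h₁ : -1 ≤ V) (h₂ : V ≤ 1) (i : n) :
    |(V i i).re| ≤ 1 := by
  have lower := (Complex.nonneg_iff.mp ((le_iff.mp h₁).diag_nonneg (i := i))).1
  have upper := (Complex.nonneg_iff.mp ((le_iff.mp h₂).diag_nonneg (i := i))).1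
  simp only [sub_apply, neg_apply, one_apply_eq, Complex.sub_re, Complex.neg_re,
    Complex.one_re] at lower upper
  rw [abs_le]
  constructor <;> linarith

lemma posSemidef_single_one (i : n) : (single i i (1 : ℂ)).PosSemidef := by
  rw [← diagonal_single, posSemidef_diagonal_iff]
  intro j
  by_cases h : j = i <;> simp [h]

variable [Fintype n]

lemma neg_one_le_star_mul_mul {U W : Matrix n n ℂ} (hU : star U * U = 1) (hW : -1 ≤ W) :
    -1 ≤ star U * W * U := by
  simpa [hU] using star_left_conjugate_le_conjugate hW U

lemma star_mul_mul_le_one {U W : Matrix n n ℂ} (hU : star U * U = 1) (hW : W ≤ 1) :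
    star U * W * U ≤ 1 := by
  simpa [hU] using star_left_conjugate_le_conjugate hW U

/-- The Schatten 1-norm; like `traceDist`, it is `0` off the Hermitian matrices. -/
noncomputable def traceNorm (A : Matrix n n ℂ) : ℝ :=
  if h : A.IsHermitian then ∑ i, |h.eigenvalues i| else 0

namespace IsHermitian

variable {A : Matrix n n ℂ} (hA : A.IsHermitian)
include hA

lemma traceNorm_eq : traceNorm A = ∑ i, |hA.eigenvalues i| :=
  dif_pos hA

lemma re_trace_mul_eq (W : Matrix n n ℂ) :
    (W * A).trace.re = ∑ i,
      ((star (hA.eigenvectorUnitary : Matrix n n ℂ) * W * hA.eigenvectorUnitary) i i).re *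
        hA.eigenvalues i := by
  conv_lhs => rw [hA.spectral_theorem, Unitary.conjStarAlgAut_apply]
  rw [← Matrix.mul_assoc, trace_mul_cycle]
  simp [← Matrix.mul_assoc, trace, mul_diagonal, Complex.re_sum]

lemma re_trace_mul_le_traceNorm {W : Matrix n n ℂ} (hW₁ : -1 ≤ W) (hW₂ : W ≤ 1) :
    (W * A).trace.re ≤ traceNorm A := by
  have hU := Unitary.coe_star_mul_self hA.eigenvectorUnitary
  rw [hA.re_trace_mul_eq, hA.traceNorm_eq]
  gcongr with i
  calc _ ≤ |_| * |hA.eigenvalues i| := (le_abs_self _).trans (abs_mul _ _).le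
    _ ≤ 1 * |hA.eigenvalues i| := by
      gcongr
      exact abs_re_diag_le_one (neg_one_le_star_mul_mul hU hW₁) (star_mul_mul_le_one hU hW₂) i
    _ = _ := one_mul _

lemma abs_re_trace_mul_le_traceNorm {W : Matrix n n ℂ} (hW₁ : -1 ≤ W) (hW₂ : W ≤ 1) :
    |(W * A).trace.re| ≤ traceNorm A := by
  refine abs_le.mpr ⟨?_, hA.re_trace_mul_le_traceNorm hW₁ hW₂⟩
  have := hA.re_trace_mul_le_traceNorm (neg_le_neg hW₂) (by simpa using neg_le_neg hW₁)
  rw [Matrix.neg_mul, trace_neg, Complex.neg_re] at this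
  linarith

lemma exists_re_trace_mul_eq_traceNorm :
    ∃ W : Matrix n n ℂ, -1 ≤ W ∧ W ≤ 1 ∧ (W * A).trace.re = traceNorm A := by
  set U : Matrix n n ℂ := ↑hA.eigenvectorUnitary
  set S : Matrix n n ℂ := diagonal fun i => ((SignType.sign (hA.eigenvalues i) : ℝ) : ℂ)
  have hU : star U * U = 1 := Unitary.coe_star_mul_self _
  have hU' : star (star U) * star U = 1 := by simp [U]
  refine ⟨U * S * star U, ?_, ?_, ?_⟩
  · simpa using neg_one_le_star_mul_mul hU' (neg_one_le_diagonal_sign hA.eigenvalues)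
  · simpa using star_mul_mul_le_one hU' (diagonal_sign_le_one hA.eigenvalues)
  · have hconj : star U * (U * S * star U) * U = S := by
      simp only [← Matrix.mul_assoc, hU, Matrix.one_mul]
      rw [Matrix.mul_assoc, hU, Matrix.mul_one]
    rw [hA.re_trace_mul_eq, hconj, hA.traceNorm_eq]
    simp [S, sign_mul_self]

end IsHermitian

lemma traceNorm_add_le {A B : Matrix n n ℂ} (hA : A.IsHermitian) (hB : B.IsHermitian) :
    traceNorm (A + B) ≤ traceNorm A + traceNorm B := by
  obtain ⟨W, hW₁, hW₂, hW⟩ := (hA.add hB).exists_re_trace_mul_eq_traceNorm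
  rw [← hW, Matrix.mul_add, trace_add, Complex.add_re]
  exact add_le_add (hA.re_trace_mul_le_traceNorm hW₁ hW₂) (hB.re_trace_mul_le_traceNorm hW₁ hW₂)

lemma traceNorm_sum_le {ι : Type*} (s : Finset ι) {A : ι → Matrix n n ℂ}
    (hA : ∀ i ∈ s, (A i).IsHermitian) :
    traceNorm (∑ i ∈ s, A i) ≤ ∑ i ∈ s, traceNorm (A i) := by
  have hsum : (∑ i ∈ s, A i).IsHermitian := isSelfAdjoint_sum s hA
  obtain ⟨W, hW₁, hW₂, hW⟩ := hsum.exists_re_trace_mul_eq_traceNorm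
  rw [← hW, Matrix.mul_sum, trace_sum, Complex.re_sum]
  exact Finset.sum_le_sum fun i hi => (hA i hi).re_trace_mul_le_traceNorm hW₁ hW₂

lemma traceNorm_real_smul_le (c : ℝ) {A : Matrix n n ℂ} (hA : A.IsHermitian) :
    traceNorm ((c : ℂ) • A) ≤ |c| * traceNorm A := by
  obtain ⟨W, hW₁, hW₂, hW⟩ :=
    (hA.smul (Complex.conj_ofReal c)).exists_re_trace_mul_eq_traceNorm
  rw [← hW, Matrix.mul_smul, trace_smul, smul_eq_mul, Complex.re_ofReal_mul]
  calc c * (W * A).trace.re ≤ |c| * |(W * A).trace.re| := by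
        rw [← abs_mul]
        exact le_abs_self _
    _ ≤ |c| * traceNorm A := by
        gcongr
        exact hA.abs_re_trace_mul_le_traceNorm hW₁ hW₂

lemma PosSemidef.traceNorm_eq {A : Matrix n n ℂ} (hA : A.PosSemidef) :
    traceNorm A = A.trace.re := by
  rw [hA.isHermitian.traceNorm_eq, hA.isHermitian.trace_eq_sum_eigenvalues]
  simp [Complex.re_sum, abs_of_nonneg (hA.eigenvalues_nonneg _)]

lemma sum_abs_re_blockTrace_le_traceNorm {ι m : Type*} [Fintype ι] [DecidableEq ι] [Fintype m]
    [DecidableEq m] {A : Matrix (ι × m) (ι × m) ℂ} (hA : A.IsHermitian) :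
    ∑ t, |(∑ i, A (t, i) (t, i)).re| ≤ traceNorm A := by
  have := hA.re_trace_mul_le_traceNorm
    (neg_one_le_diagonal_sign fun p => (∑ i, A (p.1, i) (p.1, i)).re) (diagonal_sign_le_one _)
  convert this using 1
  simp [trace, diagonal_mul, Fintype.sum_prod_type, ← Finset.mul_sum, Complex.re_sum,
    sign_mul_self]

end Matrix

open Matrix

lemma traceDist_eq_traceNorm_sub_div_two {n : Type*} [Fintype n] [DecidableEq n]
    (A B : Matrix n n ℂ) : traceDist A B = traceNorm (A - B) / 2 := by
  unfold traceDist traceNorm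
  split_ifs <;> ring

lemma isDensity_inv_sum_smul_sum_smul {ι : Type*} [Fintype ι] {d : ℕ} {w : ι → ℝ}
    (hw : ∀ i, 0 ≤ w i) (hpos : 0 < ∑ i, w i) {ρ : ι → Matrix (Fin d) (Fin d) ℂ}
    (hρ : ∀ i, IsDensity (ρ i)) :
    IsDensity (((∑ i, w i : ℝ) : ℂ)⁻¹ • ∑ i, (w i : ℂ) • ρ i) := by
  constructor
  · refine PosSemidef.smul (posSemidef_sum _ fun i _ => (hρ i).1.smul ?_) ?_
    · exact Complex.zero_le_real.mpr (hw i)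
    · rw [← Complex.ofReal_inv]
      exact Complex.zero_le_real.mpr (inv_nonneg.mpr hpos.le)
  · have hne : ((∑ i, w i : ℝ) : ℂ) ≠ 0 := Complex.ofReal_ne_zero.mpr hpos.ne'
    simp only [trace_smul, trace_sum, (hρ _).2, smul_eq_mul, mul_one]
    push_cast at hne ⊢
    exact inv_mul_cancel₀ hne

section CqState

variable {𝒯 : Type*} [Fintype 𝒯] [DecidableEq 𝒯] {d : ℕ}

lemma isHermitian_cqState (P : 𝒯 → ℝ) {ρ : 𝒯 → Matrix (Fin d) (Fin d) ℂ}
    (hρ : ∀ t, (ρ t).IsHermitian) : (cqState P ρ).IsHermitian :=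
  isSelfAdjoint_sum _ fun t _ => IsHermitian.smul
    (by rw [IsHermitian, conjTranspose_kronecker, (hρ t).eq, conjTranspose_single, star_one])
    (Complex.conj_ofReal (P t))

lemma cqState_sub_cqState (P Q : 𝒯 → ℝ) (ρ : 𝒯 → Matrix (Fin d) (Fin d) ℂ) :
    cqState P ρ - cqState Q ρ = cqState (P - Q) ρ := by
  simp [cqState, ← Finset.sum_sub_distrib, sub_smul]

lemma sum_cqState_apply_self (P : 𝒯 → ℝ) (ρ : 𝒯 → Matrix (Fin d) (Fin d) ℂ) (t : 𝒯) :
    ∑ i, cqState P ρ (t, i) (t, i) = P t * (ρ t).trace := by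
  simp [cqState, Matrix.sum_apply, single_apply, trace, Finset.mul_sum]

lemma traceNorm_cqState_le (P : 𝒯 → ℝ) {ρ : 𝒯 → Matrix (Fin d) (Fin d) ℂ}
    (hρ : ∀ t, (ρ t).PosSemidef) :
    traceNorm (cqState P ρ) ≤ ∑ t, |P t| * (ρ t).trace.re := by
  have hblock t : (single t t (1 : ℂ) ⊗ₖ ρ t).PosSemidef :=
    (posSemidef_single_one t).kronecker (hρ t)
  refine (traceNorm_sum_le _ fun t _ =>
    (hblock t).isHermitian.smul (Complex.conj_ofReal (P t))).trans ?_
  refine Finset.sum_le_sum fun t _ =>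
    (traceNorm_real_smul_le _ (hblock t).isHermitian).trans_eq ?_
  rw [(hblock t).traceNorm_eq, trace_kronecker, trace_single_eq_same, one_mul]

lemma sum_abs_sub_le_traceNorm_cqState_sub {P Q : 𝒯 → ℝ}
    {ρ σ : 𝒯 → Matrix (Fin d) (Fin d) ℂ} (hρ : ∀ t, (ρ t).IsHermitian)
    (hσ : ∀ t, (σ t).IsHermitian) :
    ∑ t, |P t * (ρ t).trace.re - Q t * (σ t).trace.re| ≤
      traceNorm (cqState P ρ - cqState Q σ) := by
  convert sum_abs_re_blockTrace_le_traceNorm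
    ((isHermitian_cqState P hρ).sub (isHermitian_cqState Q hσ)) using 3 with t
  simp [Finset.sum_sub_distrib, sum_cqState_apply_self]

theorem traceNorm_cqState_sub_le_two_mul {P Q : 𝒯 → ℝ} {ρ σ : 𝒯 → Matrix (Fin d) (Fin d) ℂ}
    (hρ : ∀ t, (ρ t).IsHermitian) (hσ : ∀ t, (σ t).PosSemidef)
    (htrace : ∀ t, P t ≠ 0 ∨ Q t ≠ 0 → (ρ t).trace = 1 ∧ (σ t).trace = 1) :
    traceNorm (cqState P ρ - cqState P σ) ≤ 2 * traceNorm (cqState P ρ - cqState Q σ) := by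
  have hσ' t : (σ t).IsHermitian := (hσ t).isHermitian
  have hclassical : ∑ t, |Q t - P t| * (σ t).trace.re
      = ∑ t, |P t * (ρ t).trace.re - Q t * (σ t).trace.re| := by
    refine Finset.sum_congr rfl fun t _ => ?_
    by_cases hPQ : P t ≠ 0 ∨ Q t ≠ 0
    · simp [htrace t hPQ, abs_sub_comm]
    · obtain ⟨hP, hQ⟩ : P t = 0 ∧ Q t = 0 := by tauto
      simp [hP, hQ]
  calc traceNorm (cqState P ρ - cqState P σ)
      = traceNorm ((cqState P ρ - cqState Q σ) + cqState (Q - P) σ) := by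
        rw [← cqState_sub_cqState, sub_add_sub_cancel]
    _ ≤ traceNorm (cqState P ρ - cqState Q σ) + traceNorm (cqState (Q - P) σ) :=
        traceNorm_add_le ((isHermitian_cqState P hρ).sub (isHermitian_cqState Q hσ'))
          (isHermitian_cqState _ hσ')
    _ ≤ traceNorm (cqState P ρ - cqState Q σ) + traceNorm (cqState P ρ - cqState Q σ) := by
        gcongr
        exact (traceNorm_cqState_le _ hσ).trans
          (hclassical.trans_le (sum_abs_sub_le_traceNorm_cqState_sub hρ hσ'))
    _ = 2 * traceNorm (cqState P ρ - cqState Q σ) := (two_mul _).symm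

end CqState

theorem stmt3_general {𝒳 𝒴 𝒵 : Type*} [Fintype 𝒳] [DecidableEq 𝒳]
    [Fintype 𝒴] [DecidableEq 𝒴] [Fintype 𝒵] [DecidableEq 𝒵] {d : ℕ}
    (P : 𝒳 × 𝒴 × 𝒵 → ℝ) (hP : IsPMF P)
    (ρ : 𝒳 × 𝒴 × 𝒵 → Matrix (Fin d) (Fin d) ℂ) (hρ : ∀ t, IsDensity (ρ t))
    (ε : ℝ)
    -- marginals
    (PY : 𝒴 → ℝ) (PXY : 𝒳 × 𝒴 → ℝ)
    (PYZ : 𝒴 × 𝒵 → ℝ) (hPYZ : ∀ y z, PYZ (y, z) = ∑ x, P (x, y, z))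
    -- conditional states ρ_E^{y,z}
    (ρE : 𝒴 × 𝒵 → Matrix (Fin d) (Fin d) ℂ)
    (hρE : ∀ y z, ρE (y, z) =
      if 0 < PYZ (y, z)
      then ((PYZ (y, z) : ℂ))⁻¹ • ∑ x, (P (x, y, z) : ℂ) • ρ (x, y, z)
      else 0)
    -- hypothesis: ρ_{XYZE} is ε-close to ρ_{X↔Y↔(ZE)}
    (h : traceDist (cqState P ρ)
        (cqState
          (fun t => if PY t.2.1 = 0 then 0 else PXY (t.1, t.2.1) * PYZ t.2 / PY t.2.1)
          (fun t => ρE t.2)) ≤ ε) :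
    -- conclusion: ρ_{XYZE} is 2ε-close to ρ_{X↔(Y,Z)↔E}
    traceDist (cqState P ρ) (cqState P (fun t => ρE t.2)) ≤ 2 * ε := by
  set Q : 𝒳 × 𝒴 × 𝒵 → ℝ :=
    fun t => if PY t.2.1 = 0 then 0 else PXY (t.1, t.2.1) * PYZ t.2 / PY t.2.1
  have hρE_density y z (hpos : 0 < PYZ (y, z)) : IsDensity (ρE (y, z)) := by
    rw [hρE, if_pos hpos, hPYZ]
    exact isDensity_inv_sum_smul_sum_smul (fun _ => hP.1 _) (hPYZ y z ▸ hpos) fun _ => hρ _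
  have hρE_psd yz : (ρE yz).PosSemidef := by
    obtain ⟨y, z⟩ := yz
    by_cases hpos : 0 < PYZ (y, z)
    · exact (hρE_density y z hpos).1
    · rw [hρE, if_neg hpos]
      exact PosSemidef.zero
  have htrace : ∀ t : 𝒳 × 𝒴 × 𝒵,
      P t ≠ 0 ∨ Q t ≠ 0 → (ρ t).trace = 1 ∧ (ρE t.2).trace = 1 := by
    rintro ⟨x, y, z⟩ hne
    by_cases hpos : 0 < PYZ (y, z)
    · exact ⟨(hρ _).2, (hρE_density y z hpos).2⟩
    · have hzero : PYZ (y, z) = 0 :=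
        le_antisymm (not_lt.mp hpos) (hPYZ y z ▸ Finset.sum_nonneg fun _ _ => hP.1 _)
      have hPzero : P (x, y, z) = 0 :=
        (Finset.sum_eq_zero_iff_of_nonneg fun _ _ => hP.1 _).mp
          ((hPYZ y z).symm.trans hzero) x (Finset.mem_univ x)
      simp [Q, hzero, hPzero] at hne
  rw [traceDist_eq_traceNorm_sub_div_two] at h ⊢
  linarith [traceNorm_cqState_sub_le_two_mul (fun t => (hρ t).1.isHermitian)
    (fun t => hρE_psd t.2) htrace]

/-- If ρ_{XYZE} is ε-close to the Markov state ρ_{X↔Y↔(ZE)}, then it is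
2ε-close to the Markov state ρ_{X↔(Y,Z)↔E}. -/
theorem stmt3 {𝒳 𝒴 𝒵 : Type*} [Fintype 𝒳] [DecidableEq 𝒳]
    [Fintype 𝒴] [DecidableEq 𝒴] [Fintype 𝒵] [DecidableEq 𝒵] {d : ℕ} (hd : 1 ≤ d)
    (P : 𝒳 × 𝒴 × 𝒵 → ℝ) (hP : IsPMF P)
    (ρ : 𝒳 × 𝒴 × 𝒵 → Matrix (Fin d) (Fin d) ℂ) (hρ : ∀ t, IsDensity (ρ t))
    (ε : ℝ) (hε : 0 ≤ ε)
    -- marginals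
    (PY : 𝒴 → ℝ) (hPY : ∀ y, PY y = ∑ x, ∑ z, P (x, y, z))
    (PXY : 𝒳 × 𝒴 → ℝ) (hPXY : ∀ x y, PXY (x, y) = ∑ z, P (x, y, z))
    (PYZ : 𝒴 × 𝒵 → ℝ) (hPYZ : ∀ y z, PYZ (y, z) = ∑ x, P (x, y, z))
    -- conditional states ρ_E^{y,z}
    (ρE : 𝒴 × 𝒵 → Matrix (Fin d) (Fin d) ℂ)
    (hρE : ∀ y z, ρE (y, z) =
      if 0 < PYZ (y, z)
      then ((PYZ (y, z) : ℂ))⁻¹ • ∑ x, (P (x, y, z) : ℂ) • ρ (x, y, z)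
      else 0)
    -- hypothesis: ρ_{XYZE} is ε-close to ρ_{X↔Y↔(ZE)}
    (h : traceDist (cqState P ρ)
        (cqState
          (fun t => if PY t.2.1 = 0 then 0 else PXY (t.1, t.2.1) * PYZ t.2 / PY t.2.1)
          (fun t => ρE t.2)) ≤ ε) :
    -- conclusion: ρ_{XYZE} is 2ε-close to ρ_{X↔(Y,Z)↔E}
    traceDist (cqState P ρ) (cqState P (fun t => ρE t.2)) ≤ 2 * ε :=
  stmt3_general P hP ρ hρ ε PY PXY PYZ hPYZ ρE hρE h
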